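/- Let u_n and v_n be the normalized Maclaurin coefficients of e^{pz}·J_ν(z) and of e^{−pz}·J_ν(z) respectively. Then the n-th normalized Maclaurin coefficient of sinh(pz)·J_ν(z) equals (u_n − v_n)/2 for every n ≥ 0; moreover u_0 = 1, u_1 = p, v_0 = 1, v_1 = −p, and for every n ≥ 1: u_{n+1} = (p(2ν+2n+1)/((n+1)(2ν+n+1)))·u_n − ((p²+1)/((n+1)(2ν+n+1)))·u_{n−1} and v_{n+1} = −(p(2ν+2n+1)/((n+1)(2ν+n+1)))·v_n − ((p²+1)/((n+1)(2ν+n+1)))·v_{n−1}. -/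

import Mathlib

open Complex

/-- The entire part of the Bessel function of the first kind:
`J_ν(z) = (z/2)^ν * besselSeries ν z`. -/
noncomputable def besselSeries (ν : ℂ) (z : ℂ) : ℂ :=
  ∑' k : ℕ, (-1) ^ k * z ^ (2 * k) / (4 ^ k * (Nat.factorial k : ℂ) * Complex.Gamma (ν + (k : ℂ) + 1))

/-- The normalized `n`-th Maclaurin coefficient of `h(z) * J_ν(z)`:
`Γ(ν+1)` times the `n`-th Maclaurin coefficient of `z ↦ h z * besselSeries ν z`. -/
noncomputable def normCoeff (ν : ℂ) (h : ℂ → ℂ) (n : ℕ) : ℂ :=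
  Complex.Gamma (ν + 1) *
    (iteratedDeriv n (fun z => h z * besselSeries ν z) 0 / (Nat.factorial n : ℂ))

/-!
Write `g_ν = ∑ a_j z^j`. The coefficients obey `j (2ν + j) a_j = -a_{j-2}`, i.e. `g_ν` solves
`z g'' + (2ν + 1) g' + z g = 0`. Since `E = e^{pz}` satisfies `E' = p E`, the product `F = E g_ν`
solves `z F'' + (2ν + 1) F' + z F = p (2 z F' - p z F + (2ν + 1) F)`, whose coefficient of `z^n`
is the claimed three-term recurrence. This identity holds for formal power series, and the
normalized coefficients are the coefficients of the Cauchy product of the Maclaurin series because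
all series involved converge absolutely on `ℂ`.
-/

open PowerSeries Filter

section BesselOperator

variable {R : Type*} [CommRing R]

noncomputable def besselOp (c : R) (f : R⟦X⟧) : R⟦X⟧ :=
  X * d⁄dX R (d⁄dX R f) + C c * d⁄dX R f + X * f

theorem derivative_C_mul (a : R) (f : R⟦X⟧) : d⁄dX R (C a * f) = C a * d⁄dX R f := by
  simp [Derivation.leibniz]

theorem besselOp_mul_of_derivative_eq {E : R⟦X⟧} {p : R} (hE : d⁄dX R E = C p * E)
    (c : R) (f : R⟦X⟧) :
    besselOp c (E * f) = E * besselOp c f +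
      C p * (X * d⁄dX R (E * f) + X * d⁄dX R (E * f) - X * (C p * (E * f)) +
        C c * (E * f)) := by
  have hEf : d⁄dX R (E * f) = E * d⁄dX R f + C p * (E * f) := by
    rw [Derivation.leibniz, hE, smul_eq_mul, smul_eq_mul]
    ring
  have hEf' : d⁄dX R (d⁄dX R (E * f)) =
      E * d⁄dX R (d⁄dX R f) + 2 * C p * (E * d⁄dX R f) + C p ^ 2 * (E * f) := by
    rw [hEf, map_add, Derivation.leibniz, hE, derivative_C_mul, hEf, smul_eq_mul, smul_eq_mul]
    ring
  rw [besselOp, besselOp, hEf', hEf]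
  ring

theorem coeff_zero_besselOp (c : R) (f : R⟦X⟧) : coeff 0 (besselOp c f) = c * coeff 1 f := by
  rw [besselOp, map_add, map_add, coeff_zero_X_mul, coeff_zero_X_mul, coeff_C_mul,
    coeff_derivative]
  simp

theorem coeff_succ_besselOp (c : R) (f : R⟦X⟧) (n : ℕ) :
    coeff (n + 1) (besselOp c f) = (n + 2) * (c + n + 1) * coeff (n + 2) f + coeff n f := by
  simp only [besselOp, map_add, coeff_succ_X_mul, coeff_C_mul, coeff_derivative]
  push_cast
  ring

end BesselOperator

noncomputable def besselCoeff (ν : ℂ) (j : ℕ) : ℂ :=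
  if Even j then
    (-1) ^ (j / 2) / (4 ^ (j / 2) * ((j / 2).factorial : ℂ) * Gamma (ν + (j / 2 : ℕ) + 1))
  else 0

theorem besselCoeff_two_mul (ν : ℂ) (k : ℕ) :
    besselCoeff ν (2 * k) = (-1) ^ k / (4 ^ k * (k.factorial : ℂ) * Gamma (ν + k + 1)) := by
  simp [besselCoeff]

theorem besselCoeff_two_mul_add_one (ν : ℂ) (k : ℕ) : besselCoeff ν (2 * k + 1) = 0 := by
  simp [besselCoeff]

theorem besselCoeff_two_mul_succ {ν : ℂ} {k : ℕ} (h : ν + k + 1 ≠ 0) :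
    besselCoeff ν (2 * (k + 1)) = -besselCoeff ν (2 * k) / (4 * (k + 1) * (ν + k + 1)) := by
  have hΓ : Gamma (ν + (k + 1 : ℕ) + 1) = (ν + k + 1) * Gamma (ν + k + 1) := by
    rw [← Gamma_add_one _ h]
    push_cast
    ring_nf
  rw [besselCoeff_two_mul, besselCoeff_two_mul, hΓ, Nat.factorial_succ]
  push_cast
  field_simp
  ring

theorem besselCoeff_add_two {ν : ℂ} (hν : ∀ k : ℕ, ν + k + 1 ≠ 0) (j : ℕ) :
    (j + 2) * (2 * ν + j + 2) * besselCoeff ν (j + 2) = -besselCoeff ν j := by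
  obtain ⟨k, rfl | rfl⟩ := Nat.even_or_odd' j
  · have := hν k
    rw [show 2 * k + 2 = 2 * (k + 1) by ring, besselCoeff_two_mul_succ this]
    push_cast
    field_simp
    ring
  · rw [show 2 * k + 1 + 2 = 2 * (k + 1) + 1 by ring, besselCoeff_two_mul_add_one,
      besselCoeff_two_mul_add_one]
    simp

theorem norm_besselCoeff_two_mul_succ_mul_pow_le (ν z : ℂ) :
    ∀ᶠ k : ℕ in atTop, ‖besselCoeff ν (2 * (k + 1)) * z ^ (2 * (k + 1))‖ ≤
      1 / 2 * ‖besselCoeff ν (2 * k) * z ^ (2 * k)‖ := by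
  filter_upwards [eventually_ge_atTop ⌈‖ν‖ + ‖z‖ ^ 2⌉₊] with k hk
  have hk : ‖ν‖ + ‖z‖ ^ 2 ≤ k := Nat.ceil_le.mp hk
  have hlow : ‖z‖ ^ 2 + 1 ≤ ‖ν + k + 1‖ := by
    have := norm_sub_norm_le ((k + 1 : ℕ) : ℂ) (-ν)
    rw [sub_neg_eq_add, norm_neg, Complex.norm_natCast] at this
    push_cast at this
    rw [show ν + k + 1 = ((k : ℂ) + 1) + ν by ring]
    linarith
  have hne : ν + k + 1 ≠ 0 := norm_pos_iff.mp (by linarith [sq_nonneg ‖z‖])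
  have hratio : ‖-z ^ 2 / (4 * (k + 1) * (ν + k + 1))‖ ≤ 1 / 2 := by
    have hk1 : ‖(k : ℂ) + 1‖ = k + 1 := by exact_mod_cast Complex.norm_natCast (k + 1)
    rw [norm_div, norm_neg, norm_pow, norm_mul, norm_mul, hk1, RCLike.norm_ofNat,
      div_le_iff₀ (by positivity)]
    nlinarith [sq_nonneg ‖z‖, (k.cast_nonneg : (0 : ℝ) ≤ k)]
  calc ‖besselCoeff ν (2 * (k + 1)) * z ^ (2 * (k + 1))‖
      = ‖besselCoeff ν (2 * k) * z ^ (2 * k)‖ *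
          ‖-z ^ 2 / (4 * (k + 1) * (ν + k + 1))‖ := by
        rw [← norm_mul, besselCoeff_two_mul_succ hne]
        ring_nf
    _ ≤ 1 / 2 * ‖besselCoeff ν (2 * k) * z ^ (2 * k)‖ := by
        rw [mul_comm (1 / 2 : ℝ)]
        gcongr

noncomputable def besselPowerSeries (ν : ℂ) : ℂ⟦X⟧ := PowerSeries.mk (besselCoeff ν)

noncomputable def expPowerSeries (p : ℂ) : ℂ⟦X⟧ :=
  PowerSeries.mk fun n => p ^ n / n.factorial

theorem besselOp_besselPowerSeries {ν : ℂ} (hν : ∀ k : ℕ, ν + k + 1 ≠ 0) :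
    besselOp (2 * ν + 1) (besselPowerSeries ν) = 0 := by
  ext n
  cases n with
  | zero =>
    rw [coeff_zero_besselOp, map_zero, besselPowerSeries, coeff_mk,
      besselCoeff_two_mul_add_one ν 0, mul_zero]
  | succ n =>
    rw [coeff_succ_besselOp, map_zero]
    simp only [besselPowerSeries, coeff_mk]
    linear_combination besselCoeff_add_two hν n

theorem derivative_expPowerSeries (p : ℂ) :
    d⁄dX ℂ (expPowerSeries p) = C p * expPowerSeries p := by
  ext n
  simp only [coeff_derivative, coeff_C_mul, expPowerSeries, coeff_mk, Nat.factorial_succ]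
  push_cast
  field_simp
  ring

theorem coeff_expPowerSeries_mul_besselPowerSeries_add_two {ν : ℂ}
    (hν : ∀ k : ℕ, ν + k + 1 ≠ 0) (p : ℂ) (n : ℕ) :
    (n + 2) * (2 * ν + n + 2) * coeff (n + 2) (expPowerSeries p * besselPowerSeries ν) =
      p * (2 * ν + 2 * n + 3) * coeff (n + 1) (expPowerSeries p * besselPowerSeries ν) -
        (p ^ 2 + 1) * coeff n (expPowerSeries p * besselPowerSeries ν) := by
  have h := congrArg (coeff (n + 1)) <|
    besselOp_mul_of_derivative_eq (derivative_expPowerSeries p) (2 * ν + 1) (besselPowerSeries ν)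
  rw [besselOp_besselPowerSeries hν, mul_zero, zero_add, coeff_succ_besselOp] at h
  -- keep `C (2 * ν + 1)` from being split by `map_add`
  generalize hc : 2 * ν + 1 = c at h
  simp only [coeff_C_mul, map_add, map_sub, coeff_succ_X_mul, coeff_derivative] at h
  subst hc
  linear_combination h

def IsEntireExpansion (F : ℂ⟦X⟧) (f : ℂ → ℂ) : Prop :=
  ∀ z, Summable (fun n => ‖coeff n F * z ^ n‖) ∧ HasSum (fun n => coeff n F * z ^ n) (f z)

theorem isEntireExpansion_besselPowerSeries (ν : ℂ) :
    IsEntireExpansion (besselPowerSeries ν) (besselSeries ν) := by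
  intro z
  set a : ℕ → ℂ := fun n => coeff n (besselPowerSeries ν) * z ^ n
  have hodd (k : ℕ) : a (2 * k + 1) = 0 := by
    simp [a, besselPowerSeries, besselCoeff_two_mul_add_one]
  have heven : Summable fun k => ‖a (2 * k)‖ :=
    summable_of_ratio_norm_eventually_le (r := 1 / 2) (by norm_num)
      (by simpa [a, besselPowerSeries] using norm_besselCoeff_two_mul_succ_mul_pow_le ν z)
  have hodd' : HasSum (fun k => a (2 * k + 1)) 0 := by
    simp only [hodd]
    exact hasSum_zero
  refine ⟨heven.even_add_odd (f := fun n => ‖a n‖) (by simp [hodd]), ?_⟩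
  suffices besselSeries ν z = ∑' k, a (2 * k) by
    simpa [this] using heven.of_norm.hasSum.even_add_odd hodd'
  refine tsum_congr fun k => ?_
  simp [a, besselPowerSeries, besselCoeff_two_mul]
  ring

theorem isEntireExpansion_expPowerSeries (p : ℂ) :
    IsEntireExpansion (expPowerSeries p) (fun z => exp (p * z)) := by
  intro z
  have hterm (n : ℕ) : coeff n (expPowerSeries p) * z ^ n = (p * z) ^ n / n.factorial := by
    simp [expPowerSeries]
    ring
  simp only [hterm, exp_eq_exp_ℂ]
  exact ⟨NormedSpace.norm_expSeries_div_summable _, NormedSpace.expSeries_div_hasSum_exp _⟩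

namespace IsEntireExpansion

variable {F G : ℂ⟦X⟧} {f g : ℂ → ℂ}

theorem const_mul (hF : IsEntireExpansion F f) (a : ℂ) :
    IsEntireExpansion (C a * F) (fun z => a * f z) := by
  intro z
  simp only [coeff_C_mul, mul_assoc, norm_mul (a := a)]
  exact ⟨(hF z).1.mul_left _, (hF z).2.mul_left _⟩

theorem sub (hF : IsEntireExpansion F f) (hG : IsEntireExpansion G g) :
    IsEntireExpansion (F - G) (fun z => f z - g z) := by
  intro z
  simp only [map_sub, sub_mul]
  exact ⟨.of_nonneg_of_le (fun _ => norm_nonneg _) (fun _ => norm_sub_le _ _)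
    ((hF z).1.add (hG z).1), (hF z).2.sub (hG z).2⟩

open Finset in
theorem mul (hF : IsEntireExpansion F f) (hG : IsEntireExpansion G g) :
    IsEntireExpansion (F * G) (fun z => f z * g z) := by
  intro z
  have hterm (n : ℕ) : coeff n (F * G) * z ^ n = ∑ kl ∈ antidiagonal n,
      (coeff kl.1 F * z ^ kl.1) * (coeff kl.2 G * z ^ kl.2) := by
    rw [coeff_mul, Finset.sum_mul]
    refine Finset.sum_congr rfl fun kl hkl => ?_
    rw [← mem_antidiagonal.mp hkl, pow_add]
    ring
  simp only [hterm]
  have hsum := summable_norm_sum_mul_antidiagonal_of_summable_norm (hF z).1 (hG z).1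
  refine ⟨hsum, ?_⟩
  rw [← (hF z).2.tsum_eq, ← (hG z).2.tsum_eq,
    tsum_mul_tsum_eq_tsum_sum_antidiagonal_of_summable_norm (hF z).1 (hG z).1]
  exact hsum.of_norm.hasSum

theorem hasFPowerSeriesOnBall (hF : IsEntireExpansion F f) :
    HasFPowerSeriesOnBall f (FormalMultilinearSeries.ofScalars ℂ fun n => coeff n F) 0 1 where
  r_le := by
    refine FormalMultilinearSeries.le_radius_of_summable_norm _ ?_
    simpa [FormalMultilinearSeries.ofScalars_norm] using (hF 1).1
  r_pos := one_pos
  hasSum {y} _ := by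
    simpa [FormalMultilinearSeries.ofScalars_apply_eq, smul_eq_mul, mul_comm] using (hF y).2

theorem iteratedDeriv_div_factorial (hF : IsEntireExpansion F f) (n : ℕ) :
    iteratedDeriv n f 0 / n.factorial = coeff n F := by
  have hp := hF.hasFPowerSeriesOnBall.hasFPowerSeriesAt
  exact congrFun (FormalMultilinearSeries.ofScalars_series_injective ℂ ℂ
    (hp.analyticAt.hasFPowerSeriesAt.eq_formalMultilinearSeries hp)) n

end IsEntireExpansion

theorem normCoeff_eq_coeff_mul {ν : ℂ} {H : ℂ⟦X⟧} {h : ℂ → ℂ}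
    (hH : IsEntireExpansion H h) (n : ℕ) :
    normCoeff ν h n = Gamma (ν + 1) * coeff n (H * besselPowerSeries ν) := by
  rw [normCoeff, (hH.mul (isEntireExpansion_besselPowerSeries ν)).iteratedDeriv_div_factorial]

theorem normCoeff_sinh_mul (ν p : ℂ) (n : ℕ) :
    normCoeff ν (fun z => sinh (p * z)) n =
      (normCoeff ν (fun z => exp (p * z)) n - normCoeff ν (fun z => exp (-p * z)) n) / 2 := by
  have hsinh : (fun z => sinh (p * z)) = fun z => 1 / 2 * (exp (p * z) - exp (-p * z)) := by
    ext z
    rw [sinh, neg_mul]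
    ring
  have hexp := isEntireExpansion_expPowerSeries
  rw [hsinh, normCoeff_eq_coeff_mul (((hexp p).sub (hexp (-p))).const_mul (1 / 2)),
    normCoeff_eq_coeff_mul (hexp p), normCoeff_eq_coeff_mul (hexp (-p)), mul_assoc, coeff_C_mul,
    sub_mul, map_sub]
  ring

theorem normCoeff_exp_mul_zero {ν : ℂ} (hΓ : Gamma (ν + 1) ≠ 0) (p : ℂ) :
    normCoeff ν (fun z => exp (p * z)) 0 = 1 := by
  rw [normCoeff_eq_coeff_mul (isEntireExpansion_expPowerSeries p)]
  simp [expPowerSeries, besselPowerSeries, besselCoeff, hΓ]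

theorem normCoeff_exp_mul_one {ν : ℂ} (hΓ : Gamma (ν + 1) ≠ 0) (p : ℂ) :
    normCoeff ν (fun z => exp (p * z)) 1 = p := by
  rw [normCoeff_eq_coeff_mul (isEntireExpansion_expPowerSeries p)]
  simp [coeff_mul, Finset.Nat.antidiagonal_succ, expPowerSeries, besselPowerSeries, besselCoeff]
  field_simp

theorem add_natCast_add_one_ne_zero {ν : ℂ} (hν : ∀ n : ℕ, 2 * ν + n + 1 ≠ 0) (k : ℕ) :
    ν + k + 1 ≠ 0 := fun h => hν (2 * k + 1) (by push_cast; linear_combination 2 * h)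

theorem normCoeff_exp_mul_succ {ν : ℂ} (hν : ∀ n : ℕ, 2 * ν + n + 1 ≠ 0) (p : ℂ)
    {n : ℕ} (hn : 1 ≤ n) :
    normCoeff ν (fun z => exp (p * z)) (n + 1) =
      (p * (2 * ν + 2 * n + 1) / ((n + 1) * (2 * ν + n + 1))) *
          normCoeff ν (fun z => exp (p * z)) n +
        (-((p ^ 2 + 1) / ((n + 1) * (2 * ν + n + 1)))) *
          normCoeff ν (fun z => exp (p * z)) (n - 1) := by
  obtain ⟨m, rfl⟩ := Nat.exists_eq_add_of_le' hn
  have hrec := coeff_expPowerSeries_mul_besselPowerSeries_add_two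
    (add_natCast_add_one_ne_zero hν) p m
  have hD : (((m + 1 : ℕ) : ℂ) + 1) * (2 * ν + (m + 1 : ℕ) + 1) ≠ 0 :=
    mul_ne_zero (Nat.cast_add_one_ne_zero _) (hν (m + 1))
  simp only [normCoeff_eq_coeff_mul (isEntireExpansion_expPowerSeries p), Nat.add_sub_cancel]
  rw [div_mul_eq_mul_div, neg_mul, div_mul_eq_mul_div, ← sub_eq_add_neg, div_sub_div_same,
    eq_div_iff hD]
  push_cast
  linear_combination Gamma (ν + 1) * hrec

theorem sinh_besselJ_coeff_recurrence (ν p : ℂ) (hν : ∀ n : ℕ, 2 * ν + (n : ℂ) + 1 ≠ 0)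
    (u : ℕ → ℂ) (hu : ∀ n, u n = normCoeff ν (fun z => Complex.exp (p * z)) n)
    (v : ℕ → ℂ) (hv : ∀ n, v n = normCoeff ν (fun z => Complex.exp (-p * z)) n)
    (w : ℕ → ℂ) (hw : ∀ n, w n = normCoeff ν (fun z => Complex.sinh (p * z)) n) :
    (∀ n : ℕ, w n = (u n - v n) / 2) ∧ u 0 = 1 ∧ u 1 = p ∧ v 0 = 1 ∧ v 1 = -p ∧
    (∀ n : ℕ, 1 ≤ n →
      u (n + 1) = (p * (2 * ν + 2 * ((n : ℂ)) + 1) / ((((n : ℂ)) + 1) * (2 * ν + ((n : ℂ)) + 1))) * u n + (-((p ^ 2 + 1) / ((((n : ℂ)) + 1) * (2 * ν + ((n : ℂ)) + 1)))) * u (n - 1) ∧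
      v (n + 1) = (-(p * (2 * ν + 2 * ((n : ℂ)) + 1)) / ((((n : ℂ)) + 1) * (2 * ν + ((n : ℂ)) + 1))) * v n + (-((p ^ 2 + 1) / ((((n : ℂ)) + 1) * (2 * ν + ((n : ℂ)) + 1)))) * v (n - 1)) := by
  have hΓ : Gamma (ν + 1) ≠ 0 := Gamma_ne_zero fun m h =>
    add_natCast_add_one_ne_zero hν m (by linear_combination h)
  simp only [hu, hv, hw]
  refine ⟨normCoeff_sinh_mul ν p, normCoeff_exp_mul_zero hΓ p, normCoeff_exp_mul_one hΓ p,
    normCoeff_exp_mul_zero hΓ (-p), normCoeff_exp_mul_one hΓ (-p), fun n hn => ⟨?_, ?_⟩⟩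
  · exact normCoeff_exp_mul_succ hν p hn
  · simpa only [neg_mul, neg_sq] using normCoeff_exp_mul_succ hν (-p) hn
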